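/- arXiv:math/9806147 — 2 statements merged into one kernel-verified Lean document; each statement's English description precedes it below -/
import Mathlib

section
/- Let K be a field, let r ≥ 1 and n, m ≥ 0, and let A = [Y_{r+n,r+n+m} ; −X_{r+m,r+m+n}] be the (2r+n+m) × (r+n+m) matrix of linear forms in x_0,…,x_n,y_0,…,y_m. If d > max(n,m) and (x,y) ∈ K^{n+1} × K^{m+1} is a point with rank A(x,y) ≤ r+n+m−d, then x = 0 and y = 0. In other words, the degeneracy locus Z_d of points of P^{n+m+1} where A drops rank by at least d is empty for d > max(n,m). -/
/-!
A nonzero vector `x` makes the banded matrix `X_{p,p+n}` of full row rank `p`: if `x_k` is its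
first nonzero entry, the columns `k, …, k + p - 1` form an upper triangular block with diagonal
`x_k`. So `x ≠ 0` forces `rank A(x,y) ≥ r + m > r + n + m - d` (as `d > n`), and symmetrically
`y ≠ 0` forces `rank A(x,y) ≥ r + n > r + n + m - d`.
-/

/-- The `p × (p + n)` banded matrix whose `(i,j)` entry is `x (j - i)` if
`0 ≤ j - i ≤ n` and `0` otherwise. -/
def bandedMatrix {K : Type*} [Field K] (p n : ℕ) (x : Fin (n + 1) → K) :
    Matrix (Fin p) (Fin (p + n)) K :=
  fun i j =>
    if h : (i : ℕ) ≤ (j : ℕ) ∧ (j : ℕ) - (i : ℕ) ≤ n then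
      x ⟨(j : ℕ) - (i : ℕ), Nat.lt_succ_of_le h.2⟩
    else 0

/-- The evaluation `A(x,y)` of the `(2r+n+m) × (r+n+m)` matrix
`A = [Y_{r+n,r+n+m} ; -X_{r+m,r+m+n}]` of linear forms at the point `(x, y)`. -/
def AmatEval {K : Type*} [Field K] (r n m : ℕ)
    (x : Fin (n + 1) → K) (y : Fin (m + 1) → K) :
    Matrix (Fin (r + n) ⊕ Fin (r + m)) (Fin (r + n + m)) K :=
  Matrix.fromRows (bandedMatrix (r + n) m y)
    ((-(bandedMatrix (r + m) n x)).submatrix id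
      (Fin.cast (show r + n + m = r + m + n by omega)))

section Banded

variable {K : Type*} [Field K] {p n : ℕ}

theorem neg_bandedMatrix (x : Fin (n + 1) → K) :
    -bandedMatrix p n x = bandedMatrix p n (-x) := by
  ext i j
  simp only [Matrix.neg_apply, bandedMatrix]
  split_ifs <;> simp

theorem rank_bandedMatrix {x : Fin (n + 1) → K} (hx : x ≠ 0) :
    (bandedMatrix p n x).rank = p := by
  obtain ⟨k, hk, hk_min⟩ := wellFounded_lt.has_min {i | x i ≠ 0} (Function.ne_iff.mp hx)
  have hbefore : ∀ i : Fin (n + 1), (i : ℕ) < k → x i = 0 :=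
    fun i hi => not_not.mp (hk_min i · hi)
  set S := (bandedMatrix p n x).submatrix id (fun j : Fin p => ⟨k + j, by omega⟩)
  have hS : S.IsUpperTriangular := by
    intro i j (hji : j < i)
    simp only [S, Matrix.submatrix_apply, id, bandedMatrix]
    split_ifs with h
    · exact hbefore _ (by rw [Fin.lt_def] at hji; dsimp only; omega)
    · rfl
  have hdiag : ∀ i, S i i = x k := by
    intro i
    simp only [S, Matrix.submatrix_apply, id, bandedMatrix]
    rw [dif_pos (by omega)]
    congr 1
    ext
    simp
  have hdet : IsUnit S.det := by
    rw [Matrix.det_of_isUpperTriangular hS, Finset.prod_congr rfl fun i _ => hdiag i,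
      Finset.prod_const]
    exact (pow_ne_zero _ hk).isUnit
  refine le_antisymm (Matrix.rank_le_height _) ?_
  calc p = S.rank := by
        rw [Matrix.rank_of_isUnit S ((Matrix.isUnit_iff_isUnit_det S).mpr hdet), Fintype.card_fin]
    _ ≤ _ := Matrix.rank_submatrix_le _ _ _

end Banded

section Amat

variable {K : Type*} [Field K] {r n m : ℕ} {x : Fin (n + 1) → K} {y : Fin (m + 1) → K}

theorem le_rank_AmatEval_of_right_ne_zero (hy : y ≠ 0) : r + n ≤ (AmatEval r n m x y).rank :=
  calc r + n = (bandedMatrix (r + n) m y).rank := (rank_bandedMatrix hy).symm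
    _ = ((AmatEval r n m x y).submatrix Sum.inl id).rank := rfl
    _ ≤ _ := Matrix.rank_submatrix_le _ _ _

theorem le_rank_AmatEval_of_left_ne_zero (hx : x ≠ 0) : r + m ≤ (AmatEval r n m x y).rank :=
  calc r + m = (bandedMatrix (r + m) n (-x)).rank := (rank_bandedMatrix (neg_ne_zero.mpr hx)).symm
    _ = ((-bandedMatrix (r + m) n x).submatrix (Equiv.refl _) (finCongr (by omega))).rank := by
      rw [Matrix.rank_submatrix, neg_bandedMatrix]
    _ = ((AmatEval r n m x y).submatrix Sum.inr id).rank := rfl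
    _ ≤ _ := Matrix.rank_submatrix_le _ _ _

end Amat

theorem Zd_empty_of_gt_max_general (K : Type*) [Field K] (r n m d : ℕ)
    (hd : d > max n m) (x : Fin (n + 1) → K) (y : Fin (m + 1) → K)
    (hrk : ((AmatEval r n m x y).rank : ℤ) ≤ (r : ℤ) + n + m - d) :
    x = 0 ∧ y = 0 := by
  obtain ⟨hdn, hdm⟩ := max_lt_iff.mp hd
  constructor
  · by_contra hx
    have := le_rank_AmatEval_of_left_ne_zero (r := r) (y := y) hx
    omega
  · by_contra hy
    have := le_rank_AmatEval_of_right_ne_zero (r := r) (x := x) hy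
    omega

/-- If `d > max(n,m)` then the degeneracy locus `Z_d` of `A` is empty: any point where
`A` drops rank by at least `d` is the origin. -/
theorem Zd_empty_of_gt_max (K : Type*) [Field K] (r n m d : ℕ) (hr : 1 ≤ r)
    (hd : d > max n m) (x : Fin (n + 1) → K) (y : Fin (m + 1) → K)
    (hrk : ((AmatEval r n m x y).rank : ℤ) ≤ (r : ℤ) + n + m - d) :
    x = 0 ∧ y = 0 :=
  Zd_empty_of_gt_max_general K r n m d hd x y hrk
end

section
/- Let K be a field, let r ≥ 1 and n, m ≥ 0, and let A = [Y_{r+n,r+n+m} ; −X_{r+m,r+m+n}] be the (2r+n+m) × (r+n+m) matrix of linear forms in x_0,…,x_n,y_0,…,y_m. Let 1 ≤ d ≤ min(n,m)+1 and let t = (t_0,…,t_{d−1}) ∈ K^d be nonzero. Define x ∈ K^{n+1} by x_i = t_i for 0 ≤ i ≤ d−1 and x_i = 0 for i ≥ d, and define y ∈ K^{m+1} by y_{m−i} = t_{d−1−i} for 0 ≤ i ≤ d−1 and y_{m−i} = 0 for i ≥ d. Then rank A(x,y) > r+n+m−d. -/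
/-!
Let `b` be the last index with `t_b ≠ 0`. Then `b` is also the last nonzero index of `x`, and
`c = m + 1 - d + b` that of `y`. Pairing the rows of `-X` with the columns shifted by `b`, and the
remaining rows of `Y` with the columns shifted by `c`, picks out a square submatrix of `A(x,y)` of
size `r + n + c - b = r + n + m + 1 - d` that is lower triangular with diagonal entries `±t_b`.
-/

open Matrix

def IsLastNonzero {ι M : Type*} [LT ι] [Zero M] (x : ι → M) (b : ι) : Prop :=
  x b ≠ 0 ∧ ∀ k, b < k → x k = 0

theorem exists_isLastNonzero_of_ne_zero {ι M : Type*} [LinearOrder ι] [Fintype ι] [Zero M]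
    {x : ι → M} (hx : x ≠ 0) : ∃ b, IsLastNonzero x b := by
  classical
  obtain ⟨i, hi⟩ := Function.ne_iff.mp hx
  obtain ⟨b, hb, hmax⟩ :=
    (Finset.univ.filter (x · ≠ 0)).exists_max_image id ⟨i, by simpa using hi⟩
  refine ⟨b, (Finset.mem_filter.mp hb).2, fun k hk => ?_⟩
  by_contra hk0
  exact (hmax k (by simpa using hk0)).not_gt hk

section Padding

variable {K : Type*} [Zero K] {d : ℕ} {t : Fin d → K} {b : Fin d}

theorem IsLastNonzero.padZeroRight (ht : IsLastNonzero t b) {n : ℕ} (hd : d ≤ n + 1) :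
    IsLastNonzero (fun i : Fin (n + 1) => if h : (i : ℕ) < d then t ⟨i, h⟩ else 0)
      ⟨b, by omega⟩ := by
  refine ⟨by simpa using ht.1, fun k hk => ?_⟩
  dsimp only
  split_ifs with h
  · exact ht.2 _ (Fin.lt_def.mpr hk)
  · rfl

theorem IsLastNonzero.padZeroLeft (ht : IsLastNonzero t b) {m : ℕ} (hd : d ≤ m + 1) :
    IsLastNonzero
      (fun j : Fin (m + 1) => if h : m < (j : ℕ) + d then t ⟨(j : ℕ) + d - 1 - m, by omega⟩ else 0)
      ⟨m + 1 - d + b, by omega⟩ := by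
  refine ⟨?_, fun k hk => ?_⟩ <;> dsimp only
  · rw [dif_pos (by omega)]
    convert ht.1 using 2
    ext
    simp only
    omega
  · split_ifs with h
    · exact ht.2 _ (by rw [Fin.lt_def] at hk ⊢; simp only at hk ⊢; omega)
    · rfl

end Padding

theorem Matrix.card_le_rank_of_isLowerTriangular_submatrix {K m n ι : Type*} [Field K]
    [Fintype n] [Fintype ι] [LinearOrder ι] (A : Matrix m n K) (φ : ι → m) (ψ : ι → n)
    (hA : (A.submatrix φ ψ).IsLowerTriangular) (hdiag : ∀ k, A (φ k) (ψ k) ≠ 0) :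
    Fintype.card ι ≤ A.rank := by
  classical
  calc Fintype.card ι = (A.submatrix φ ψ * 1).rank := by
        rw [rank_mul_eq_right_of_isLowerTriangular _ _ hA hdiag, rank_one]
    _ ≤ A.rank := by simpa using rank_submatrix_le A φ ψ

section Banded

variable {K : Type*} [Field K] {p n : ℕ} {x : Fin (n + 1) → K}

theorem bandedMatrix_apply_of_eq_add {i : Fin p} {j : Fin (p + n)} {k : Fin (n + 1)}
    (h : (j : ℕ) = i + k) : bandedMatrix p n x i j = x k := by
  rw [bandedMatrix, dif_pos (by omega)]
  congr
  omega

theorem bandedMatrix_apply_eq_zero {b : Fin (n + 1)} (hx : ∀ k, b < k → x k = 0)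
    {i : Fin p} {j : Fin (p + n)} (h : (i : ℕ) + b < j) : bandedMatrix p n x i j = 0 := by
  rw [bandedMatrix]
  split_ifs
  · exact hx _ (Fin.lt_def.mpr (by simp only; omega))
  · rfl

end Banded

section Sylvester

variable {K : Type*} [Field K] {r n m : ℕ} {x : Fin (n + 1) → K} {y : Fin (m + 1) → K}

@[simp]
theorem AmatEval_inl (i : Fin (r + n)) (j : Fin (r + n + m)) :
    AmatEval r n m x y (Sum.inl i) j = bandedMatrix (r + n) m y i j := rfl

@[simp]
theorem AmatEval_inr (i : Fin (r + m)) (j : Fin (r + n + m)) :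
    AmatEval r n m x y (Sum.inr i) j = -bandedMatrix (r + m) n x i (Fin.cast (by omega) j) := rfl

def AmatEval.triangularRow (r : ℕ) {n m : ℕ} (b : Fin (n + 1)) (c : Fin (m + 1))
    (k : Fin (r + n + c - b)) : Fin (r + n) ⊕ Fin (r + m) :=
  if h : (k : ℕ) < r + m then Sum.inr ⟨k, h⟩ else Sum.inl ⟨k + b - c, by omega⟩

theorem le_rank_AmatEval {b : Fin (n + 1)} {c : Fin (m + 1)} (hx : IsLastNonzero x b)
    (hy : IsLastNonzero y c) : r + n + c - b ≤ (AmatEval r n m x y).rank := by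
  have hcm := c.isLt
  have key := (AmatEval r n m x y).card_le_rank_of_isLowerTriangular_submatrix
    (AmatEval.triangularRow r b c) (fun k => ⟨k + b, by omega⟩) ?_ ?_
  · simpa using key
  · intro k l hkl
    replace hkl : (k : ℕ) < l := hkl
    simp only [submatrix_apply, AmatEval.triangularRow]
    split_ifs
    · simpa using bandedMatrix_apply_eq_zero hx.2 (by simp only; omega)
    · exact bandedMatrix_apply_eq_zero hy.2 (by simp only; omega)
  · intro k
    simp only [AmatEval.triangularRow]
    split_ifs
    · rw [AmatEval_inr, neg_ne_zero, bandedMatrix_apply_of_eq_add (k := b) rfl]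
      exact hx.1
    · rw [AmatEval_inl, bandedMatrix_apply_of_eq_add (k := c) (by simp only; omega)]
      exact hy.1

end Sylvester

/-- On the linear subspace parametrized by `t = (t_0, …, t_{d-1})`, with
`x_i = t_i` for `i < d`, `x_i = 0` otherwise, and `y_{m-i} = t_{d-1-i}` for `i < d`,
`y_{m-i} = 0` otherwise, the matrix `A` does not degenerate to rank `r + n + m - d`
at any nonzero `t`. -/
theorem A_nondegenerate_on_subspace (K : Type*) [Field K] (r n m d : ℕ) (hr : 1 ≤ r)
    (hd2 : d ≤ min n m + 1) (t : Fin d → K) (ht : t ≠ 0) :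
    (AmatEval r n m
        (fun i : Fin (n + 1) => if h : (i : ℕ) < d then t ⟨(i : ℕ), h⟩ else 0)
        (fun j : Fin (m + 1) => if h : m < (j : ℕ) + d then
          t ⟨(j : ℕ) + d - 1 - m, by omega⟩ else 0)).rank
      > r + n + m - d := by
  obtain ⟨b, hb⟩ := exists_isLastNonzero_of_ne_zero ht
  have hbd := b.isLt
  refine lt_of_lt_of_le ?_ <|
    le_rank_AmatEval (hb.padZeroRight (n := n) (by omega)) (hb.padZeroLeft (m := m) (by omega))
  simp only
  omega
end
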